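/- Let N be a positive integer and n = 2^N - 1. Then for all x, y, p, q in ℚ (or any commutative ring), (p^{N-1}x + y)(p^{N-2}x + qy)⋯(x + q^{N-1}y) = ∑_{m=0}^{n} p^{w_n(m)} q^{z_n(m)} x^{s(m)} y^{s(n-m)}, where w_n(m) = ∑_{k=0}^{N-1} (N-k-1)·δ(n_k, m_k). -/

import Mathlib

/-- Binary sum-of-digits function. -/
def sdig (m : ℕ) : ℕ := (Nat.digits 2 m).sum

/-- The `i`-th digit of `m` in base `b`. -/
def dig (b m i : ℕ) : ℕ := m / b ^ i % b

/-- `z_n(m) = ∑_{k=0}^{N-1} k·(1 - δ(n_k, m_k))`, the weighted count of positions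
among the `N` lowest binary digits at which `m` and `n` differ. -/
def zfun (N n m : ℕ) : ℕ :=
  ∑ k ∈ Finset.range N, k * (1 - if dig 2 n k = dig 2 m k then 1 else 0)

/-- `w_n(m) = ∑_{k=0}^{N-1} (N-k-1)·δ(n_k, m_k)`, a reverse-weighted count of the
positions among the `N` lowest binary digits at which `m` and `n` agree. -/
def wfun (N n m : ℕ) : ℕ :=
  ∑ k ∈ Finset.range N, (N - k - 1) * (if dig 2 n k = dig 2 m k then 1 else 0)

/-! Expanding the product means choosing one summand in each factor; encode the choice by
`m < 2 ^ N`, taking `p ^ (N - 1 - k) * x` in factor `k` exactly when bit `k` of `m` is set.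
The monomial so obtained has `x`-degree `s(m)` and, as the bits of `n - m` are the complements
of those of `m`, `y`-degree `s(n - m)`; because every bit of `n` is set, its `p`- and
`q`-exponents are `w_n(m)` and `z_n(m)`. -/

open Finset

theorem Finset.prod_range_add_eq_sum_testBit {R : Type*} [CommSemiring R] (f g : ℕ → R) (N : ℕ) :
    ∏ k ∈ range N, (f k + g k) =
      ∑ m ∈ range (2 ^ N), ∏ k ∈ range N, if m.testBit k then f k else g k := by
  induction N with
  | zero => simp
  | succ N ih =>
    have hlow : ∀ m, (∏ k ∈ range N, if (2 ^ N + m).testBit k then f k else g k) =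
        ∏ k ∈ range N, if m.testBit k then f k else g k := fun m =>
      prod_congr rfl fun k hk => by rw [Nat.testBit_two_pow_add_gt (mem_range.mp hk)]
    have htop : ∀ m ∈ range (2 ^ N), (2 ^ N + m).testBit N = !m.testBit N ∧ m.testBit N = false :=
      fun m hm => ⟨Nat.testBit_two_pow_add_eq m N, Nat.testBit_lt_two_pow (mem_range.mp hm)⟩
    rw [prod_range_succ, ih, pow_succ, mul_two, sum_range_add, mul_add, sum_mul, sum_mul,
      add_comm]
    simp only [prod_range_succ]
    congr 1 <;> refine sum_congr rfl fun m hm => ?_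
    · simp [htop m hm]
    · simp [htop m hm, hlow]

theorem Finset.prod_ite_pow_mul {ι M : Type*} [CommMonoid M] (s : Finset ι) (P : ι → Prop)
    [DecidablePred P] (u v : ι → ℕ) (a b x y : M) :
    ∏ k ∈ s, (if P k then a ^ u k * x else b ^ v k * y) =
      a ^ (∑ k ∈ s with P k, u k) * b ^ (∑ k ∈ s with ¬P k, v k) *
        x ^ #{k ∈ s | P k} * y ^ #{k ∈ s | ¬P k} := by
  rw [prod_ite, prod_mul_distrib, prod_mul_distrib, prod_pow_eq_pow_sum, prod_pow_eq_pow_sum,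
    prod_const, prod_const]
  ac_rfl

theorem sdig_eq_card_testBit {N m : ℕ} (hm : m < 2 ^ N) :
    sdig m = #{k ∈ range N | m.testBit k} := by
  induction N generalizing m with
  | zero => simp [show m = 0 by simpa using hm, sdig]
  | succ N ih =>
    rcases m.eq_zero_or_pos with rfl | hm0
    · simp [sdig]
    have hdigits : sdig m = m % 2 + sdig (m / 2) := by
      simp [sdig, Nat.digits_def' one_lt_two hm0]
    rw [hdigits, ih (by rw [pow_succ] at hm; omega), card_filter, card_filter, sum_range_succ']
    simp only [Nat.testBit_div_two, Nat.testBit_zero, decide_eq_true_eq]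
    split_ifs <;> omega

theorem sdig_two_pow_sub_one_sub {N m : ℕ} (hm : m < 2 ^ N) :
    sdig (2 ^ N - 1 - m) = #{k ∈ range N | ¬m.testBit k} := by
  rw [sdig_eq_card_testBit (N := N) (by omega), Nat.sub_sub, Nat.add_comm]
  congr 1
  refine filter_congr fun k hk => ?_
  simp [Nat.testBit_two_pow_sub_succ hm, mem_range.mp hk]

theorem dig_two_pow_sub_one_eq_iff {N m k : ℕ} (hk : k < N) :
    dig 2 (2 ^ N - 1) k = dig 2 m k ↔ m.testBit k := by
  rw [dig, dig, ← Nat.toNat_testBit, ← Nat.toNat_testBit, Nat.testBit_two_pow_sub_one,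
    decide_eq_true hk]
  cases m.testBit k <;> simp

theorem wfun_two_pow_sub_one (N m : ℕ) :
    wfun N (2 ^ N - 1) m = ∑ k ∈ range N with m.testBit k, (N - 1 - k) := by
  rw [wfun, sum_filter]
  refine sum_congr rfl fun k hk => ?_
  rw [if_congr (dig_two_pow_sub_one_eq_iff (mem_range.mp hk)) rfl rfl]
  split_ifs <;> omega

theorem zfun_two_pow_sub_one (N m : ℕ) :
    zfun N (2 ^ N - 1) m = ∑ k ∈ range N with ¬m.testBit k, k := by
  rw [zfun, sum_filter]
  refine sum_congr rfl fun k hk => ?_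
  rw [if_congr (dig_two_pow_sub_one_eq_iff (mem_range.mp hk)) rfl rfl]
  split_ifs <;> simp

theorem pq_digital_binomial_theorem_general (N : ℕ) (n : ℕ) (hn : n = 2 ^ N - 1)
    (x y p q : ℚ) :
    (∏ i ∈ Finset.range N, (p ^ (N - 1 - i) * x + q ^ i * y)) =
      ∑ m ∈ Finset.range (n + 1),
        p ^ wfun N n m * q ^ zfun N n m * x ^ sdig m * y ^ sdig (n - m) := by
  subst hn
  rw [Nat.sub_add_cancel Nat.one_le_two_pow, prod_range_add_eq_sum_testBit]
  refine sum_congr rfl fun m hm => ?_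
  rw [prod_ite_pow_mul, wfun_two_pow_sub_one, zfun_two_pow_sub_one,
    sdig_eq_card_testBit (mem_range.mp hm), sdig_two_pow_sub_one_sub (mem_range.mp hm)]

/-- **A p,q-analog of the digital binomial theorem:** for `n = 2^N - 1`,
`(p^{N-1}x + y)(p^{N-2}x + qy)⋯(x + q^{N-1}y)
  = ∑_{m=0}^{n} p^{w_n(m)} q^{z_n(m)} x^{s(m)} y^{s(n-m)}`. -/
theorem pq_digital_binomial_theorem (N : ℕ) (hN : 0 < N) (n : ℕ) (hn : n = 2 ^ N - 1)
    (x y p q : ℚ) :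
    (∏ i ∈ Finset.range N, (p ^ (N - 1 - i) * x + q ^ i * y)) =
      ∑ m ∈ Finset.range (n + 1),
        p ^ wfun N n m * q ^ zfun N n m * x ^ sdig m * y ^ sdig (n - m) :=
  pq_digital_binomial_theorem_general N n hn x y p q
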